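/- arXiv:1801.08748 — 4 statements merged into one kernel-verified Lean document; each statement's English description precedes it below -/
import Mathlib

section
/- Let G be a group and let E and H be subgroups of G such that E is perfect (⁅E,E⁆ = E), E normalizes H, and the centralizer of E in G equals the center of G. If ⁅H,E⁆ is contained in the center of G, then H is contained in the center of G. -/
/-! By the three subgroups lemma, `⁅⁅E, E⁆, H⁆` is trivial because `⁅⁅H, E⁆, E⁆` and
`⁅⁅E, H⁆, E⁆` both lie in `⁅Z(G), E⁆ = 1`; as `E` is perfect, `H` therefore centralizes `E`. -/

namespace Subgroup

theorem le_centralizer_of_commutator_le_center {G : Type*} [Group G] {E H : Subgroup G}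
    (hperf : ⁅E, E⁆ = E) (hHE : ⁅H, E⁆ ≤ center G) : H ≤ centralizer E := by
  have hHEE : ⁅⁅H, E⁆, E⁆ = ⊥ :=
    eq_bot_iff.mpr ((commutator_mono hHE le_rfl).trans (commutator_center_left E).le)
  have hEHE : ⁅⁅E, H⁆, E⁆ = ⊥ := by rwa [commutator_comm E H]
  have hEEH : ⁅⁅E, E⁆, H⁆ = ⊥ := commutator_commutator_eq_bot_of_rotate hEHE hHEE
  rw [hperf, commutator_comm] at hEEH
  exact (commutator_eq_bot_iff_le_centralizer).mp hEEH

end Subgroup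

theorem le_center_of_commutator_le_center_general
    {G : Type*} [Group G] (E H : Subgroup G)
    (hperf : ⁅E, E⁆ = E)
    (hcent : Subgroup.centralizer (E : Set G) = Subgroup.center G)
    (hHE : ⁅H, E⁆ ≤ Subgroup.center G) :
    H ≤ Subgroup.center G :=
  hcent ▸ Subgroup.le_centralizer_of_commutator_le_center hperf hHE

/-- Let `G` be a group and `E`, `H` subgroups such that `E` is perfect, `E`
normalizes `H`, and the centralizer of `E` in `G` is the center of `G`.
If `⁅H,E⁆` is central, then `H` is central. -/
theorem le_center_of_commutator_le_center
    {G : Type*} [Group G] (E H : Subgroup G)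
    (hperf : ⁅E, E⁆ = E)
    (hnorm : ∀ e ∈ E, ∀ h ∈ H, e⁻¹ * h * e ∈ H)
    (hcent : Subgroup.centralizer (E : Set G) = Subgroup.center G)
    (hHE : ⁅H, E⁆ ≤ Subgroup.center G) :
    H ≤ Subgroup.center G :=
  le_center_of_commutator_le_center_general E H hperf hcent hHE
end

section
/- Let Φ be a reduced crystallographic root system spanning a finite-dimensional vector space V over ℚ, with a fixed base (system of simple roots) Π. Let J ⊆ Π be a subset, and let Γ be a finite group of linear automorphisms of V, each of which maps Φ onto Φ, maps Π onto Π, and maps J onto J. Let N be the subgroup of the root lattice ℤΦ generated by the simple roots in Π∖J together with all differences α − σ(α) for α ∈ J and σ ∈ Γ, let π : ℤΦ → ℤΦ/N be the quotient homomorphism, and set Φ_{J,Γ} = π(Φ) ∖ {0}. Let β ∈ π(Π) ∩ Φ_{J,Γ} be a simple relative root. Then there exists a proper parabolic subset Σ of Φ_{J,Γ}, i.e., a subset Σ ⊊ Φ_{J,Γ} such that Σ ∪ (−Σ) = Φ_{J,Γ} and such that whenever α₁, α₂ ∈ Σ and α₁ + α₂ ∈ Φ_{J,Γ} one has α₁ +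 α₂ ∈ Σ, which contains every α ∈ Φ_{J,Γ} satisfying both α + β ∉ Φ_{J,Γ} and α + β ≠ 0. -/
/-!
Lift `β` to a simple root `b ∈ J` and let `H` be the finite group of automorphisms of `V` that
permute `Φ` and fix every root modulo `N`; it contains `Γ` and the reflections in the roots of
`Δ \ J`. With `p = ∑_{h ∈ H} h b`, the functional `μ x = B (∑_{h ∈ H} h x) p` is `H`-invariant,
hence kills `N` (a reflection `s_δ` gives `μ δ = μ (-δ)`), and `μ b = B p p > 0`, since the sum
of the `J`-coordinates is `1` on every `h b`, so `p ≠ 0`. Thus `μ` descends to `V ⧸ N`, and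
`{a ∈ Φ_{J,Γ} | 0 ≤ μ a}` is a parabolic subset missing `-β`. If `μ (π α) < 0`, some
`B (h α) (h' b)` is negative, so `h α + h' b` is a root or zero, and it lifts `π α + β`.
-/

open Set

namespace LinearMap.BilinForm

variable {K M : Type*} [Field K] [LinearOrder K] [IsStrictOrderedRing K] [AddCommGroup M]
  [Module K M] (B : LinearMap.BilinForm K M)

lemma apply_mul_apply_lt_of_linearIndependent (hp : ∀ x, x ≠ 0 → 0 < B x x) {x y : M}
    (h : LinearIndependent K ![x, y]) : B x y * B y x < B x x * B y y := by
  have hs : ∀ z, 0 ≤ B z z := fun z => by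
    rcases eq_or_ne z 0 with rfl | hz
    · simp
    · exact (hp z hz).le
  exact (B.apply_mul_apply_le_of_forall_zero_le hs x y).lt_of_ne fun he =>
    B.not_linearIndependent_of_apply_mul_apply_eq hp x y he h

end LinearMap.BilinForm

section RootSystem

variable {V : Type*} [AddCommGroup V] [Module ℚ V] {B : LinearMap.BilinForm ℚ V} {Φ : Set V}
  {α δ : V}

lemma linearIndependent_pair_of_apply_neg (hBpos : ∀ x : V, x ≠ 0 → 0 < B x x)
    (hred : ∀ α ∈ Φ, ∀ c : ℚ, c • α ∈ Φ → c = 1 ∨ c = -1)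
    (hα : α ∈ Φ) (hδ : δ ∈ Φ) (hneg : B α δ < 0) (hne : α ≠ -δ) :
    LinearIndependent ℚ ![δ, α] := by
  have hδ0 : δ ≠ 0 := by rintro rfl; simp at hneg
  refine (LinearIndependent.pair_iff' hδ0).mpr fun c hc => ?_
  subst hc
  rcases hred δ hδ c hα with rfl | rfl
  · exact (hBpos δ hδ0).not_gt (by simpa using hneg)
  · exact hne (neg_one_smul ℚ δ)

theorem add_mem_of_apply_neg (hBsymm : ∀ x y : V, B x y = B y x)
    (hBpos : ∀ x : V, x ≠ 0 → 0 < B x x)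
    (hreflect : ∀ α ∈ Φ, ∀ β ∈ Φ, β - (2 * B β α / B α α) • α ∈ Φ)
    (hcrys : ∀ α ∈ Φ, ∀ β ∈ Φ, ∃ n : ℤ, 2 * B β α = (n : ℚ) * B α α)
    (hred : ∀ α ∈ Φ, ∀ c : ℚ, c • α ∈ Φ → c = 1 ∨ c = -1)
    (hα : α ∈ Φ) (hδ : δ ∈ Φ) (hneg : B α δ < 0) (hne : α ≠ -δ) : α + δ ∈ Φ := by
  have hαα : 0 < B α α := hBpos α (by rintro rfl; simp at hneg)
  have hδδ : 0 < B δ δ := hBpos δ (by rintro rfl; simp at hneg)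
  have hCS := B.apply_mul_apply_lt_of_linearIndependent hBpos
    (linearIndependent_pair_of_apply_neg hBpos hred hα hδ hneg hne)
  obtain ⟨n, hn⟩ := hcrys δ hδ α hα
  obtain ⟨m, hm⟩ := hcrys α hα δ hδ
  rw [hBsymm δ α] at hm hCS
  -- `n` and `m` are negative, and `n * m < 4` by the strict Cauchy–Schwarz inequality.
  have hnm : n = -1 ∨ m = -1 := by
    have hn0 : n < 0 := by exact_mod_cast (show (n : ℚ) < 0 by nlinarith)
    have hm0 : m < 0 := by exact_mod_cast (show (m : ℚ) < 0 by nlinarith)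
    have h4 : n * m < 4 := by exact_mod_cast (show (n : ℚ) * m < 4 by nlinarith)
    by_contra! h
    nlinarith [show n ≤ -2 by omega, show m ≤ -2 by omega]
  rcases hnm with rfl | rfl
  · have hc : 2 * B α δ / B δ δ = -1 := by rw [hn]; push_cast; field_simp
    simpa [hc] using hreflect δ hδ α hα
  · have hc : 2 * B α δ / B α α = -1 := by rw [hm]; push_cast; field_simp
    simpa [hBsymm δ α, hc, add_comm] using hreflect α hα δ hδ

lemma neg_mem_of_reflect (hBpos : ∀ x : V, x ≠ 0 → 0 < B x x)
    (hreflect : ∀ α ∈ Φ, ∀ β ∈ Φ, β - (2 * B β α / B α α) • α ∈ Φ) (hα : α ∈ Φ) (hα0 : α ≠ 0) :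
    -α ∈ Φ := by
  have := hreflect α hα α hα
  rwa [mul_div_assoc, div_self (hBpos α hα0).ne', mul_one, two_smul, sub_add_cancel_left] at this

end RootSystem

section AutModulo

variable (R : Type*) {M : Type*} [Ring R] [AddCommGroup M] [Module R M]

def rootAutModulo (Φ : Set M) (N : AddSubgroup M) : Subgroup (M ≃ₗ[R] M) where
  carrier := {g | g '' Φ = Φ ∧ ∀ α ∈ Φ, g α - α ∈ N}
  mul_mem' {g h} hg hh := by
    refine ⟨by rw [show ⇑(g * h) = g ∘ h from rfl, image_comp, hh.1, hg.1], fun α hα => ?_⟩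
    have hhα : h α ∈ Φ := hh.1 ▸ mem_image_of_mem h hα
    simpa using add_mem (hg.2 _ hhα) (hh.2 α hα)
  one_mem' := ⟨by simp, fun α _ => by simp⟩
  inv_mem' {g} hg := by
    have hΦ : g.symm '' Φ = Φ := by
      conv_lhs => rw [← hg.1]
      simp [image_image]
    refine ⟨hΦ, fun α hα => ?_⟩
    have := neg_mem (hg.2 _ (hΦ ▸ mem_image_of_mem g.symm hα))
    rwa [LinearEquiv.apply_symm_apply, neg_sub] at this

variable {R} {Φ : Set M} {N : AddSubgroup M}

lemma finite_setOf_mapsTo (hfin : Φ.Finite) (hspan : Submodule.span R Φ = ⊤) :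
    {g : M ≃ₗ[R] M | MapsTo g Φ Φ}.Finite := by
  have : Finite Φ := hfin.to_subtype
  refine Set.Finite.of_finite_image (f := fun g : M ≃ₗ[R] M => Φ.domRestrict g)
    ((Set.Finite.pi' fun _ => hfin).subset ?_) fun g _ h _ he => ?_
  · rintro _ ⟨g, hg, rfl⟩ x
    exact hg x.2
  · exact LinearEquiv.toLinearMap_injective
      (LinearMap.ext_on hspan fun x hx => congrFun he ⟨x, hx⟩)

lemma finite_rootAutModulo (hfin : Φ.Finite) (hspan : Submodule.span R Φ = ⊤) :
    Finite (rootAutModulo R Φ N) :=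
  ((finite_setOf_mapsTo hfin hspan).subset fun g (hg : g ∈ rootAutModulo R Φ N) =>
    (mapsTo_image g Φ).mono_right hg.1.subset).to_subtype

lemma mem_rootAutModulo_of_sub_mem {Δ : Set M} {g : M ≃ₗ[R] M} (hg : g '' Φ = Φ)
    (hΦΔ : Φ ⊆ AddSubgroup.closure Δ) (hΔ : ∀ δ ∈ Δ, g δ - δ ∈ N) :
    g ∈ rootAutModulo R Φ N := by
  refine ⟨hg, fun α hα => ?_⟩
  have : AddSubgroup.closure Δ ≤ N.comap (g.toLinearMap - LinearMap.id).toAddMonoidHom :=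
    (AddSubgroup.closure_le _).mpr hΔ
  exact this (hΦΔ hα)

end AutModulo

section Reflection

variable {R M : Type*} [CommRing R] [AddCommGroup M] [Module R M] {Φ : Set M} {N : AddSubgroup M}

lemma reflection_mem_rootAutModulo {x : M} {f : Module.Dual R M} (hf : f x = 2) (hx : x ∈ N)
    (hmaps : MapsTo (Module.reflection hf) Φ Φ) (hint : ∀ α ∈ Φ, ∃ n : ℤ, f α = n) :
    Module.reflection hf ∈ rootAutModulo R Φ N := by
  refine ⟨(Module.bijOn_reflection_of_mapsTo hf hmaps).image_eq, fun α hα => ?_⟩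
  obtain ⟨n, hn⟩ := hint α hα
  rw [Module.reflection_apply, sub_sub_cancel_left, hn, Int.cast_smul_eq_zsmul]
  exact neg_mem (zsmul_mem hx n)

end Reflection

lemma subset_closure_of_base {M : Type*} [AddCommGroup M] {Φ Δ : Set M}
    (hΔbase : ∀ α ∈ Φ, α ∈ AddSubmonoid.closure Δ ∨ -α ∈ AddSubmonoid.closure Δ) :
    Φ ⊆ AddSubgroup.closure Δ := by
  have hle : AddSubmonoid.closure Δ ≤ (AddSubgroup.closure Δ).toAddSubmonoid :=
    AddSubmonoid.closure_le.mpr AddSubgroup.subset_closure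
  intro α hα
  rcases hΔbase α hα with h | h
  · exact hle h
  · simpa using neg_mem (show -α ∈ AddSubgroup.closure Δ from hle h)

section OrbitSum

variable {R M : Type*} [Semiring R] [AddCommMonoid M] [Module R M]
  (H : Subgroup (M ≃ₗ[R] M)) [Fintype H]

def orbitSum : M →ₗ[R] M := ∑ h : H, (h : M ≃ₗ[R] M).toLinearMap

lemma orbitSum_apply (x : M) : orbitSum H x = ∑ h : H, (h : M ≃ₗ[R] M) x := by
  simp [orbitSum]

variable {H}

lemma orbitSum_apply_of_mem {g : M ≃ₗ[R] M} (hg : g ∈ H) (x : M) :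
    orbitSum H (g x) = orbitSum H x := by
  simp only [orbitSum_apply]
  exact Fintype.sum_equiv (Equiv.mulRight ⟨g, hg⟩) _ _ fun h => rfl

end OrbitSum

section OrbitSumField

variable {K M : Type*} [Field K] [AddCommGroup M] [Module K M]
  {H : Subgroup (M ≃ₗ[K] M)} [Fintype H]

lemma orbitSum_ne_zero [CharZero K] {f : Module.Dual K M} {x : M}
    (hf : ∀ h ∈ H, f (h x) = f x) (hx : f x ≠ 0) : orbitSum H x ≠ 0 := by
  intro h0
  have : f (orbitSum H x) = Fintype.card H • f x := by
    simp [orbitSum_apply, map_sum, hf]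
  rw [h0, map_zero] at this
  simp [Fintype.card_ne_zero, hx] at this

lemma apply_orbitSum_eq_zero_of_apply_eq_neg [CharZero K] (B : LinearMap.BilinForm K M)
    {g : M ≃ₗ[K] M} (hg : g ∈ H) {x : M} (hx : g x = -x) (y : M) :
    B (orbitSum H x) y = 0 := by
  have := congrArg (B · y) (orbitSum_apply_of_mem hg x)
  simp only [hx, map_neg, LinearMap.neg_apply] at this
  exact self_eq_neg.mp this.symm

lemma exists_apply_neg_of_apply_orbitSum_neg [LinearOrder K] [IsStrictOrderedRing K]
    (B : LinearMap.BilinForm K M) {x y : M} (hneg : B (orbitSum H x) (orbitSum H y) < 0) :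
    ∃ h h' : H, B ((h : M ≃ₗ[K] M) x) ((h' : M ≃ₗ[K] M) y) < 0 := by
  contrapose! hneg
  simp only [orbitSum_apply, map_sum, LinearMap.sum_apply]
  exact Finset.sum_nonneg fun h' _ => Finset.sum_nonneg fun h _ => hneg h h'

end OrbitSumField

lemma exists_dual_eq_indicator {K V : Type*} [Field K] [AddCommGroup V] [Module K V]
    {s : Set V} (hs : LinearIndepOn K id s) (t : Set V) :
    ∃ f : Module.Dual K V, ∀ x ∈ s, f x = t.indicator 1 x := by
  let b := Module.Basis.extend hs
  refine ⟨b.constr K fun i => t.indicator 1 (i : V), fun x hx => ?_⟩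
  simpa [b, Module.Basis.extend_apply_self] using
    b.constr_basis K _ ⟨x, Module.Basis.subset_extend hs hx⟩

section Parabolic

variable {Q : Type*} [AddCommGroup Q]

def IsParabolic (S R : Set Q) : Prop :=
  S ⊆ R ∧ S ∪ (fun x => -x) '' S = R ∧ ∀ a₁ ∈ S, ∀ a₂ ∈ S, a₁ + a₂ ∈ R → a₁ + a₂ ∈ S

lemma isParabolic_setOf_nonneg {L : Type*} [AddCommGroup L] [LinearOrder L]
    [IsOrderedAddMonoid L] {R : Set Q} (hR : ∀ a ∈ R, -a ∈ R) (ℓ : Q →+ L) :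
    IsParabolic {a ∈ R | 0 ≤ ℓ a} R := by
  refine ⟨fun a ha => ha.1, Subset.antisymm ?_ fun a ha => ?_, ?_⟩
  · rintro _ (ha | ⟨a, ha, rfl⟩)
    exacts [ha.1, hR a ha.1]
  · rcases le_total 0 (ℓ a) with h | h
    · exact Or.inl ⟨ha, h⟩
    · exact Or.inr ⟨-a, ⟨hR a ha, by simpa using h⟩, neg_neg a⟩
  · rintro a₁ ⟨-, h₁⟩ a₂ ⟨-, h₂⟩ h
    exact ⟨h, by simpa using add_nonneg h₁ h₂⟩

lemma neg_mem_image_diff_zero {M : Type*} [AddCommGroup M] {Φ : Set M}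
    (hΦ : ∀ α ∈ Φ, α ≠ 0 → -α ∈ Φ) (π : M →+ Q) : ∀ a ∈ π '' Φ \ {0}, -a ∈ π '' Φ \ {0} := by
  rintro _ ⟨⟨α, hα, rfl⟩, ha0⟩
  refine ⟨⟨-α, hΦ α hα ?_, map_neg π α⟩, by simpa using ha0⟩
  rintro rfl
  exact ha0 (map_zero π)

end Parabolic

section RelativeRoots

variable {V : Type*} [AddCommGroup V] [Module ℚ V] {B : LinearMap.BilinForm ℚ V}
  {Φ Δ J : Set V} {N : AddSubgroup V}

lemma exists_mem_rootAutModulo_apply_eq_neg (hBpos : ∀ x : V, x ≠ 0 → 0 < B x x)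
    (hreflect : ∀ α ∈ Φ, ∀ β ∈ Φ, β - (2 * B β α / B α α) • α ∈ Φ)
    (hcrys : ∀ α ∈ Φ, ∀ β ∈ Φ, ∃ n : ℤ, 2 * B β α = (n : ℚ) * B α α)
    {δ : V} (hδ : δ ∈ Φ) (hδ0 : δ ≠ 0) (hδN : δ ∈ N) :
    ∃ g ∈ rootAutModulo ℚ Φ N, g δ = -δ := by
  have hδδ : B δ δ ≠ 0 := (hBpos δ hδ0).ne'
  let f : Module.Dual ℚ V := (2 / B δ δ) • B.flip δ
  have hf : f δ = 2 := by simp [f, hδδ]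
  have hfα : ∀ α, f α = 2 * B α δ / B δ δ := fun α => by simp [f]; ring
  refine ⟨Module.reflection hf, reflection_mem_rootAutModulo hf hδN (fun α hα => ?_)
    (fun α hα => ?_), Module.reflection_apply_self hf⟩
  · simpa [Module.reflection_apply, hfα] using hreflect δ hδ α hα
  · obtain ⟨n, hn⟩ := hcrys δ hδ α hα
    exact ⟨n, by rw [hfα, hn]; field_simp⟩

lemma mem_rootAutModulo_of_image_eq (hΦΔ : Φ ⊆ AddSubgroup.closure Δ) {σ : V ≃ₗ[ℚ] V}
    (hσΦ : σ '' Φ = Φ) (hσΔ : σ '' Δ = Δ) (hσJ : σ '' J = J) (hΔJ : ∀ δ ∈ Δ \ J, δ ∈ N)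
    (hJN : ∀ α ∈ J, α - σ α ∈ N) : σ ∈ rootAutModulo ℚ Φ N := by
  refine mem_rootAutModulo_of_sub_mem hσΦ hΦΔ fun δ hδ => ?_
  by_cases hδJ : δ ∈ J
  · simpa using neg_mem (hJN δ hδJ)
  · have hσδ : σ δ ∈ Δ \ J :=
      ⟨hσΔ ▸ mem_image_of_mem σ hδ, fun h => hδJ (σ.injective.mem_set_image.mp (hσJ.symm ▸ h))⟩
    exact sub_mem (hΔJ _ hσδ) (hΔJ δ ⟨hδ, hδJ⟩)

lemma closure_le_ker_apply_orbitSum {H : Subgroup (V ≃ₗ[ℚ] V)} [Fintype H]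
    {Γ : Subgroup (V ≃ₗ[ℚ] V)} {D : Set V} (hΓ : Γ ≤ H) (hD : ∀ δ ∈ D, ∃ g ∈ H, g δ = -δ)
    (y : V) :
    AddSubgroup.closure (D ∪ {x | ∃ α ∈ J, ∃ σ ∈ Γ, x = α - σ α}) ≤
      ((B.flip y).comp (orbitSum H)).toAddMonoidHom.ker := by
  refine (AddSubgroup.closure_le _).mpr ?_
  rintro _ (hδ | ⟨α, -, σ, hσ, rfl⟩)
  · obtain ⟨g, hg, hgδ⟩ := hD _ hδ
    exact apply_orbitSum_eq_zero_of_apply_eq_neg B hg hgδ y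
  · simp [orbitSum_apply_of_mem (hΓ hσ)]

lemma exists_dual_closure_le_ker (hΔindep : LinearIndepOn ℚ id Δ) (hJ : J ⊆ Δ)
    {Γ : Subgroup (V ≃ₗ[ℚ] V)} (hΓJ : ∀ σ ∈ Γ, ⇑σ '' J = J) :
    ∃ f : Module.Dual ℚ V, (∀ α ∈ J, f α = 1) ∧
      AddSubgroup.closure ((Δ \ J) ∪ {x | ∃ α ∈ J, ∃ σ ∈ Γ, x = α - σ α}) ≤
        f.toAddMonoidHom.ker := by
  obtain ⟨f, hf⟩ := exists_dual_eq_indicator hΔindep J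
  have hfJ : ∀ α ∈ J, f α = 1 := fun α hα => by simp [hf α (hJ hα), hα]
  refine ⟨f, hfJ, (AddSubgroup.closure_le _).mpr ?_⟩
  rintro _ (⟨hδ, hδJ⟩ | ⟨α, hα, σ, hσ, rfl⟩)
  · simp [hf _ hδ, hδJ]
  · have hσα : σ α ∈ J := hΓJ σ hσ ▸ mem_image_of_mem σ hα
    simp [hfJ α hα, hfJ _ hσα]

lemma exists_sub_mem_of_apply_orbitSum_neg (hBsymm : ∀ x y : V, B x y = B y x)
    (hBpos : ∀ x : V, x ≠ 0 → 0 < B x x)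
    (hreflect : ∀ α ∈ Φ, ∀ β ∈ Φ, β - (2 * B β α / B α α) • α ∈ Φ)
    (hcrys : ∀ α ∈ Φ, ∀ β ∈ Φ, ∃ n : ℤ, 2 * B β α = (n : ℚ) * B α α)
    (hred : ∀ α ∈ Φ, ∀ c : ℚ, c • α ∈ Φ → c = 1 ∨ c = -1)
    {H : Subgroup (V ≃ₗ[ℚ] V)} [Fintype H] (hH : H ≤ rootAutModulo ℚ Φ N) {α δ : V}
    (hα : α ∈ Φ) (hδ : δ ∈ Φ) (hneg : B (orbitSum H α) (orbitSum H δ) < 0) :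
    ∃ γ, (γ ∈ Φ ∨ γ = 0) ∧ γ - (α + δ) ∈ N := by
  obtain ⟨⟨h, hh⟩, ⟨h', hh'⟩, hneg⟩ := exists_apply_neg_of_apply_orbitSum_neg B hneg
  have hhα : h α ∈ Φ := (hH hh).1 ▸ mem_image_of_mem h hα
  have hh'δ : h' δ ∈ Φ := (hH hh').1 ▸ mem_image_of_mem h' hδ
  refine ⟨h α + h' δ, ?_, ?_⟩
  · by_cases hne : h α = -h' δ
    · exact Or.inr (by rw [hne, neg_add_cancel])
    · exact Or.inl (add_mem_of_apply_neg hBsymm hBpos hreflect hcrys hred hhα hh'δ hneg hne)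
  · simpa [add_sub_add_comm] using add_mem ((hH hh).2 α hα) ((hH hh').2 δ hδ)

theorem exists_functional_of_simpleRoot (hBsymm : ∀ x y : V, B x y = B y x)
    (hBpos : ∀ x : V, x ≠ 0 → 0 < B x x) (hfin : Φ.Finite) (hspan : Submodule.span ℚ Φ = ⊤)
    (hreflect : ∀ α ∈ Φ, ∀ β ∈ Φ, β - (2 * B β α / B α α) • α ∈ Φ)
    (hcrys : ∀ α ∈ Φ, ∀ β ∈ Φ, ∃ n : ℤ, 2 * B β α = (n : ℚ) * B α α)
    (hred : ∀ α ∈ Φ, ∀ c : ℚ, c • α ∈ Φ → c = 1 ∨ c = -1)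
    (hΔΦ : Δ ⊆ Φ) (hΔindep : LinearIndepOn ℚ id Δ)
    (hΔbase : ∀ α ∈ Φ, α ∈ AddSubmonoid.closure Δ ∨ -α ∈ AddSubmonoid.closure Δ)
    (hJ : J ⊆ Δ) {Γ : Subgroup (V ≃ₗ[ℚ] V)} (hΓΦ : ∀ σ ∈ Γ, ⇑σ '' Φ = Φ)
    (hΓΔ : ∀ σ ∈ Γ, ⇑σ '' Δ = Δ) (hΓJ : ∀ σ ∈ Γ, ⇑σ '' J = J)
    (hN : N = AddSubgroup.closure ((Δ \ J) ∪ {x | ∃ α ∈ J, ∃ σ ∈ Γ, x = α - σ α}))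
    {b : V} (hbJ : b ∈ J) :
    ∃ μ : V →+ ℚ, N ≤ μ.ker ∧ 0 < μ b ∧
      ∀ α ∈ Φ, μ α < 0 → ∃ γ, (γ ∈ Φ ∨ γ = 0) ∧ γ - (α + b) ∈ N := by
  have hgen : ∀ x ∈ (Δ \ J) ∪ {x | ∃ α ∈ J, ∃ σ ∈ Γ, x = α - σ α}, x ∈ N :=
    fun x hx => hN ▸ AddSubgroup.subset_closure hx
  let H := rootAutModulo ℚ Φ N
  have : Finite H := finite_rootAutModulo hfin hspan
  let : Fintype H := Fintype.ofFinite H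
  have hΓH : Γ ≤ H := fun σ hσ =>
    mem_rootAutModulo_of_image_eq (subset_closure_of_base hΔbase) (hΓΦ σ hσ) (hΓΔ σ hσ)
      (hΓJ σ hσ) (fun δ hδ => hgen δ (Or.inl hδ)) fun α hα => hgen _ (Or.inr ⟨α, hα, σ, hσ, rfl⟩)
  have hreflH : ∀ δ ∈ Δ \ J, ∃ g ∈ H, g δ = -δ := fun δ hδ =>
    exists_mem_rootAutModulo_apply_eq_neg hBpos hreflect hcrys (hΔΦ hδ.1)
      (hΔindep.ne_zero hδ.1) (hgen δ (Or.inl hδ))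
  have hp : orbitSum H b ≠ 0 := by
    obtain ⟨f, hfJ, hfN⟩ := exists_dual_closure_le_ker hΔindep hJ hΓJ
    refine orbitSum_ne_zero (f := f) (fun h hh => ?_) (by simp [hfJ b hbJ])
    have := hfN (hN ▸ hh.2 b (hΔΦ (hJ hbJ)))
    rwa [AddMonoidHom.mem_ker, LinearMap.toAddMonoidHom_coe, map_sub, sub_eq_zero] at this
  refine ⟨((B.flip (orbitSum H b)).comp (orbitSum H)).toAddMonoidHom,
    hN ▸ closure_le_ker_apply_orbitSum hΓH hreflH _, hBpos _ hp, fun α hα hneg =>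
    exists_sub_mem_of_apply_orbitSum_neg hBsymm hBpos hreflect hcrys hred le_rfl hα
      (hΔΦ (hJ hbJ)) hneg⟩

end RelativeRoots

theorem exists_proper_parabolic_subset_of_simple_relative_root_general
    {V : Type*} [AddCommGroup V] [Module ℚ V]
    (B : V →ₗ[ℚ] V →ₗ[ℚ] ℚ)
    (hBsymm : ∀ x y : V, B x y = B y x)
    (hBpos : ∀ x : V, x ≠ 0 → 0 < B x x)
    (Φ : Set V) (hfin : Φ.Finite)
    (hspan : Submodule.span ℚ Φ = ⊤)
    (hreflect : ∀ α ∈ Φ, ∀ β ∈ Φ, β - (2 * B β α / B α α) • α ∈ Φ)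
    (hcrys : ∀ α ∈ Φ, ∀ β ∈ Φ, ∃ n : ℤ, 2 * B β α = (n : ℚ) * B α α)
    (hred : ∀ α ∈ Φ, ∀ c : ℚ, c • α ∈ Φ → c = 1 ∨ c = -1)
    (Δ : Set V) (hΔΦ : Δ ⊆ Φ)
    (hΔindep : LinearIndependent ℚ (fun x : Δ => (x : V)))
    (hΔbase : ∀ α ∈ Φ, α ∈ AddSubmonoid.closure Δ ∨ -α ∈ AddSubmonoid.closure Δ)
    (J : Set V) (hJ : J ⊆ Δ)
    (Γ : Subgroup (V ≃ₗ[ℚ] V))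
    (hΓΦ : ∀ σ ∈ Γ, ⇑σ '' Φ = Φ)
    (hΓΔ : ∀ σ ∈ Γ, ⇑σ '' Δ = Δ)
    (hΓJ : ∀ σ ∈ Γ, ⇑σ '' J = J)
    (N : AddSubgroup V)
    (hN : N = AddSubgroup.closure
      ((Δ \ J) ∪ {x | ∃ α ∈ J, ∃ σ ∈ Γ, x = α - σ α}))
    (π : V →+ V ⧸ N) (hπ : π = QuotientAddGroup.mk' N)
    (ΦJΓ : Set (V ⧸ N)) (hΦJΓ : ΦJΓ = (⇑π '' Φ) \ {0})
    (β : V ⧸ N) (hβ : β ∈ (⇑π '' Δ) ∩ ΦJΓ) :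
    ∃ S : Set (V ⧸ N),
      S ⊆ ΦJΓ ∧ S ≠ ΦJΓ ∧
      S ∪ ((fun x => -x) '' S) = ΦJΓ ∧
      (∀ a₁ ∈ S, ∀ a₂ ∈ S, a₁ + a₂ ∈ ΦJΓ → a₁ + a₂ ∈ S) ∧
      (∀ a ∈ ΦJΓ, a + β ∉ ΦJΓ → a + β ≠ 0 → a ∈ S) := by
  subst hΦJΓ hπ
  obtain ⟨⟨b, hbΔ, rfl⟩, hβ⟩ := hβ
  have hbJ : b ∈ J := by
    by_contra hbJ
    exact hβ.2 ((QuotientAddGroup.eq_zero_iff b).mpr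
      (hN ▸ AddSubgroup.subset_closure (Or.inl ⟨hbΔ, hbJ⟩)))
  obtain ⟨μ, hμN, hμb, hμneg⟩ := exists_functional_of_simpleRoot hBsymm hBpos hfin hspan
    hreflect hcrys hred hΔΦ hΔindep hΔbase hJ hΓΦ hΓΔ hΓJ hN hbJ
  let μq : V ⧸ N →+ ℚ := QuotientAddGroup.lift N μ hμN
  have hsymm := neg_mem_image_diff_zero
    (fun _ hα => neg_mem_of_reflect hBpos hreflect hα) (QuotientAddGroup.mk' N)
  obtain ⟨hSsub, hSunion, hSadd⟩ := isParabolic_setOf_nonneg hsymm μq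
  refine ⟨_, hSsub, fun hS => ?_, hSunion, hSadd, fun a ha hnot hne => ⟨ha, ?_⟩⟩
  · have := (hS ▸ hsymm _ ⟨⟨b, hΔΦ hbΔ, rfl⟩, hβ.2⟩ : _ ∈ {a | _ ∧ 0 ≤ μq a}).2
    rw [map_neg, neg_nonneg] at this
    exact this.not_gt hμb
  · by_contra! hlt
    obtain ⟨α, hα, rfl⟩ := ha.1
    obtain ⟨γ, hγ, hγN⟩ := hμneg α hα hlt
    have hγπ : QuotientAddGroup.mk' N γ = QuotientAddGroup.mk' N α + QuotientAddGroup.mk' N b := by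
      rw [← map_add]
      exact QuotientAddGroup.eq_iff_sub_mem.mpr hγN
    rcases hγ with hγ | rfl
    · by_cases hγ0 : QuotientAddGroup.mk' N γ = 0
      · exact hne (hγπ ▸ hγ0)
      · exact hnot ⟨⟨γ, hγ, hγπ⟩, hγπ ▸ hγ0⟩
    · exact hne (hγπ ▸ map_zero _)

/-- **Existence of a parabolic subset avoiding a simple relative root**
(Lemma 4.8 of the paper).

`Φ` is a reduced crystallographic root system spanning a finite-dimensional
`ℚ`-vector space `V` (crystallographicity and reducedness are expressed via a
Weyl-invariant positive-definite symmetric bilinear form `B`), `Δ` is a base of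
`Φ`, `J ⊆ Δ`, and `Γ` is a finite group of linear automorphisms of `V`
preserving `Φ`, `Δ` and `J`.  `N` is the subgroup of the root lattice generated
by `Δ \ J` and the differences `α - σ α` (`α ∈ J`, `σ ∈ Γ`), `π` is the
quotient map, and `ΦJΓ = π(Φ) \ {0}`.  For every simple relative root
`β ∈ π(Δ) ∩ ΦJΓ` there exists a proper parabolic subset `S ⊊ ΦJΓ`
(`S ∪ (-S) = ΦJΓ`, closed under addition within `ΦJΓ`) containing every
`a ∈ ΦJΓ` with `a + β ∉ ΦJΓ` and `a + β ≠ 0`. -/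
theorem exists_proper_parabolic_subset_of_simple_relative_root
    {V : Type*} [AddCommGroup V] [Module ℚ V] [FiniteDimensional ℚ V]
    (B : V →ₗ[ℚ] V →ₗ[ℚ] ℚ)
    (hBsymm : ∀ x y : V, B x y = B y x)
    (hBpos : ∀ x : V, x ≠ 0 → 0 < B x x)
    (Φ : Set V) (hfin : Φ.Finite) (h0 : (0 : V) ∉ Φ)
    (hspan : Submodule.span ℚ Φ = ⊤)
    (hreflect : ∀ α ∈ Φ, ∀ β ∈ Φ, β - (2 * B β α / B α α) • α ∈ Φ)
    (hcrys : ∀ α ∈ Φ, ∀ β ∈ Φ, ∃ n : ℤ, 2 * B β α = (n : ℚ) * B α α)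
    (hred : ∀ α ∈ Φ, ∀ c : ℚ, c • α ∈ Φ → c = 1 ∨ c = -1)
    (Δ : Set V) (hΔΦ : Δ ⊆ Φ)
    (hΔindep : LinearIndependent ℚ (fun x : Δ => (x : V)))
    (hΔbase : ∀ α ∈ Φ, α ∈ AddSubmonoid.closure Δ ∨ -α ∈ AddSubmonoid.closure Δ)
    (J : Set V) (hJ : J ⊆ Δ)
    (Γ : Subgroup (V ≃ₗ[ℚ] V)) (hΓfin : (Γ : Set (V ≃ₗ[ℚ] V)).Finite)
    (hΓΦ : ∀ σ ∈ Γ, ⇑σ '' Φ = Φ)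
    (hΓΔ : ∀ σ ∈ Γ, ⇑σ '' Δ = Δ)
    (hΓJ : ∀ σ ∈ Γ, ⇑σ '' J = J)
    (N : AddSubgroup V)
    (hN : N = AddSubgroup.closure
      ((Δ \ J) ∪ {x | ∃ α ∈ J, ∃ σ ∈ Γ, x = α - σ α}))
    (π : V →+ V ⧸ N) (hπ : π = QuotientAddGroup.mk' N)
    (ΦJΓ : Set (V ⧸ N)) (hΦJΓ : ΦJΓ = (⇑π '' Φ) \ {0})
    (β : V ⧸ N) (hβ : β ∈ (⇑π '' Δ) ∩ ΦJΓ) :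
    ∃ S : Set (V ⧸ N),
      S ⊆ ΦJΓ ∧ S ≠ ΦJΓ ∧
      S ∪ ((fun x => -x) '' S) = ΦJΓ ∧
      (∀ a₁ ∈ S, ∀ a₂ ∈ S, a₁ + a₂ ∈ ΦJΓ → a₁ + a₂ ∈ S) ∧
      (∀ a ∈ ΦJΓ, a + β ∉ ΦJΓ → a + β ≠ 0 → a ∈ S) :=
  exists_proper_parabolic_subset_of_simple_relative_root_general B hBsymm hBpos Φ hfin hspan
    hreflect hcrys hred Δ hΔΦ hΔindep hΔbase J hJ Γ hΓΦ hΓΔ hΓJ N hN π hπ ΦJΓ hΦJΓ β hβ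
end

section
/- Let Φ be a reduced crystallographic simply-laced root system (all roots of the same length) spanning a finite-dimensional vector space V over ℚ, with a fixed base Π and an inner product (·,·) on V invariant under the Weyl group of Φ. Let J ⊆ Π be a subset, and let Γ be a finite group of linear automorphisms of V preserving the inner product, each of which maps Φ onto Φ, maps Π onto Π, and maps J onto J. Let N be the subgroup of ℤΦ generated by Π∖J together with all differences α − σ(α) for α ∈ J and σ ∈ Γ, let π : ℤΦ → ℤΦ/N be the quotient homomorphism, and set Φ_{J,Γ} = π(Φ) ∖ {0}. Let β ∈ π(Π) ∩ Φ_{J,Γ} be a simple relative root. Then for every α ∈ Φ_{J,Γ}, the inner product (a, Σ_{b ∈ π⁻¹(β) ∩ Φ} b) takes the same value for all roots a ∈ π⁻¹(α) ∩ Φ; in particular, the two sets {α ∈ Φ_{J,Γ} : (a, Σ_{b ∈ π⁻¹(β) ∩ Φ} b) ≥ 0 for all a ∈ π⁻¹(α) ∩ Φ} and {α ∈ Φ_{J,Γ} : (a, Σ_{b ∈ π⁻¹(β) ∩ Φ} b) ≥ 0 for some a ∈ π⁻¹(α) ∩ Φ} coincide. -/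
open scoped BigOperators

/-- **Well-definedness of the pairing with a simple relative root fiber in the
simply-laced case** (equation (Sigma(beta)) in Lemma 4.8 of the paper).

`Φ` is a reduced crystallographic *simply-laced* root system (all roots have
the same length) spanning a finite-dimensional `ℚ`-vector space `V`, with
Weyl-invariant positive-definite symmetric bilinear form `B` and base `Δ`;
`J ⊆ Δ`, and `Γ` is a finite group of linear automorphisms of `V` preserving
`B`, `Φ`, `Δ` and `J`.  With `N`, `π`, `ΦJΓ = π(Φ) \ {0}` as usual, and a
simple relative root `β ∈ π(Δ) ∩ ΦJΓ`, the inner product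
`B a (∑ b ∈ π⁻¹(β) ∩ Φ, b)` is independent of the choice of `a` in the fiber
`π⁻¹(α) ∩ Φ` of any relative root `α ∈ ΦJΓ`; in particular the "for all" and
"for some" nonnegativity sets coincide. -/
theorem pairing_with_fiber_sum_const_on_fibers
    {V : Type*} [AddCommGroup V] [Module ℚ V] [FiniteDimensional ℚ V]
    (B : V →ₗ[ℚ] V →ₗ[ℚ] ℚ)
    (hBsymm : ∀ x y : V, B x y = B y x)
    (hBpos : ∀ x : V, x ≠ 0 → 0 < B x x)
    (Φ : Set V) (hfin : Φ.Finite) (h0 : (0 : V) ∉ Φ)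
    (hspan : Submodule.span ℚ Φ = ⊤)
    (hreflect : ∀ α ∈ Φ, ∀ β ∈ Φ, β - (2 * B β α / B α α) • α ∈ Φ)
    (hcrys : ∀ α ∈ Φ, ∀ β ∈ Φ, ∃ n : ℤ, 2 * B β α = (n : ℚ) * B α α)
    (hred : ∀ α ∈ Φ, ∀ c : ℚ, c • α ∈ Φ → c = 1 ∨ c = -1)
    (hsimplylaced : ∀ a ∈ Φ, ∀ b ∈ Φ, B a a = B b b)
    (Δ : Set V) (hΔΦ : Δ ⊆ Φ)
    (hΔindep : LinearIndependent ℚ (fun x : Δ => (x : V)))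
    (hΔbase : ∀ α ∈ Φ, α ∈ AddSubmonoid.closure Δ ∨ -α ∈ AddSubmonoid.closure Δ)
    (J : Set V) (hJ : J ⊆ Δ)
    (Γ : Subgroup (V ≃ₗ[ℚ] V)) (hΓfin : (Γ : Set (V ≃ₗ[ℚ] V)).Finite)
    (hΓB : ∀ σ ∈ Γ, ∀ x y : V, B (σ x) (σ y) = B x y)
    (hΓΦ : ∀ σ ∈ Γ, ⇑σ '' Φ = Φ)
    (hΓΔ : ∀ σ ∈ Γ, ⇑σ '' Δ = Δ)
    (hΓJ : ∀ σ ∈ Γ, ⇑σ '' J = J)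
    (N : AddSubgroup V)
    (hN : N = AddSubgroup.closure
      ((Δ \ J) ∪ {x | ∃ α ∈ J, ∃ σ ∈ Γ, x = α - σ α}))
    (π : V →+ V ⧸ N) (hπ : π = QuotientAddGroup.mk' N)
    (ΦJΓ : Set (V ⧸ N)) (hΦJΓ : ΦJΓ = (⇑π '' Φ) \ {0})
    (β : V ⧸ N) (hβ : β ∈ (⇑π '' Δ) ∩ ΦJΓ) :
    (∀ α ∈ ΦJΓ, ∀ a ∈ Φ ∩ ⇑π ⁻¹' {α}, ∀ a' ∈ Φ ∩ ⇑π ⁻¹' {α},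
        B a (∑ᶠ b ∈ Φ ∩ ⇑π ⁻¹' {β}, b) = B a' (∑ᶠ b ∈ Φ ∩ ⇑π ⁻¹' {β}, b)) ∧
    {α | α ∈ ΦJΓ ∧ ∀ a ∈ Φ ∩ ⇑π ⁻¹' {α},
        0 ≤ B a (∑ᶠ b ∈ Φ ∩ ⇑π ⁻¹' {β}, b)}
      = {α | α ∈ ΦJΓ ∧ ∃ a ∈ Φ ∩ ⇑π ⁻¹' {α},
        0 ≤ B a (∑ᶠ b ∈ Φ ∩ ⇑π ⁻¹' {β}, b)} := by
  classical
  -- The fiber of β, as a finite set, and its sum S.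
  have hFfin : (Φ ∩ ⇑π ⁻¹' {β}).Finite := hfin.subset Set.inter_subset_left
  set T : Finset V := hFfin.toFinset with hT
  have hTmem : ∀ x, x ∈ T ↔ x ∈ Φ ∧ π x = β := by
    intro x
    simp [hT, Set.Finite.mem_toFinset]
  set S : V := ∑ b ∈ T, b with hS
  have hSeq : ∑ᶠ b ∈ Φ ∩ ⇑π ⁻¹' {β}, b = S := by
    rw [show (Φ ∩ ⇑π ⁻¹' {β}) = (T : Set V) from hFfin.coe_toFinset.symm,
      finsum_mem_coe_finset]
  rw [hSeq]
  -- π x = 0 iff x ∈ N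
  have hπ0 : ∀ x : V, π x = 0 ↔ x ∈ N := by
    intro x; rw [hπ]; exact QuotientAddGroup.eq_zero_iff x
  -- generators of N lie in N
  have hNmem : ∀ x ∈ ((Δ \ J) ∪ {x | ∃ α ∈ J, ∃ σ ∈ Γ, x = α - σ α}), x ∈ N := by
    intro x hx; rw [hN]; exact AddSubgroup.subset_closure hx
  -- Φ is contained in the subgroup generated by Δ
  have hΦΔ : ∀ x ∈ Φ, x ∈ AddSubgroup.closure Δ := by
    intro x hx
    have hsub : AddSubmonoid.closure Δ ≤ (AddSubgroup.closure Δ).toAddSubmonoid :=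
      (AddSubmonoid.closure_le).mpr AddSubgroup.subset_closure
    rcases hΔbase x hx with h | h
    · exact hsub h
    · have h2 : -x ∈ AddSubgroup.closure Δ := hsub h
      simpa using neg_mem h2
  -- elements of Γ do not change the class modulo N
  have hσdiff : ∀ σ ∈ Γ, ∀ x ∈ AddSubgroup.closure Δ, σ x - x ∈ N := by
    intro σ hσ x hx
    have hle : AddSubgroup.closure Δ ≤
        AddSubgroup.comap ((σ.toLinearMap - LinearMap.id).toAddMonoidHom) N := by
      refine (AddSubgroup.closure_le _).mpr ?_
      intro y hyΔ
      have hgoal : σ y - y ∈ N → y ∈ (AddSubgroup.comap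
          ((σ.toLinearMap - LinearMap.id).toAddMonoidHom) N : Set V) := by
        intro h
        simpa [AddSubgroup.mem_comap, LinearMap.sub_apply] using h
      apply hgoal
      by_cases hyJ : y ∈ J
      · have h1 : y - σ y ∈ N := hNmem _ (Or.inr ⟨y, hyJ, σ, hσ, rfl⟩)
        simpa using neg_mem h1
      · have h1 : y ∈ N := hNmem _ (Or.inl ⟨hyΔ, hyJ⟩)
        have hσy : σ y ∈ Δ := by
          rw [← hΓΔ σ hσ]; exact Set.mem_image_of_mem _ hyΔ
        have hσyJ : σ y ∉ J := by
          intro hmem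
          rw [← hΓJ σ hσ] at hmem
          obtain ⟨z, hz, hze⟩ := hmem
          exact hyJ ((σ.injective hze) ▸ hz)
        have h2 : σ y ∈ N := hNmem _ (Or.inl ⟨hσy, hσyJ⟩)
        exact sub_mem h2 h1
    have := hle hx
    simpa [AddSubgroup.mem_comap, LinearMap.sub_apply] using this
  have hπσ : ∀ σ ∈ Γ, ∀ b ∈ Φ, π (σ b) = π b := by
    intro σ hσ b hb
    have h := (hπ0 _).mpr (hσdiff σ hσ b (hΦΔ b hb))
    rw [map_sub, sub_eq_zero] at h
    exact h
  -- Key: B x S = 0 for all x ∈ N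
  have hkey : ∀ x ∈ N, B x S = 0 := by
    have hle : N ≤ (LinearMap.ker (B.flip S)).toAddSubgroup := by
      rw [hN]
      refine (AddSubgroup.closure_le _).mpr ?_
      rintro y (⟨hyΔ, hyJ⟩ | ⟨α0, hα0, σ, hσ, rfl⟩)
      · -- case y ∈ Δ \ J : reflection in y negates pairing with S
        have hyΔ' : y ∈ Δ := hyΔ
        have hγΦ : y ∈ Φ := hΔΦ hyΔ'
        have hγ0 : y ≠ 0 := fun h => h0 (h ▸ hγΦ)
        have hBγγ : B y y ≠ 0 := ne_of_gt (hBpos y hγ0)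
        set s : V → V := fun x => x - (2 * B x y / B y y) • y with hs
        have hBs : ∀ x : V, B (s x) y = -(B x y) := by
          intro x
          have hcanc : 2 * B x y / B y y * B y y = 2 * B x y :=
            div_mul_cancel₀ _ hBγγ
          simp only [hs, map_sub, map_smul, LinearMap.sub_apply,
            LinearMap.smul_apply, smul_eq_mul]
          rw [hcanc]; ring
        have hsinv : ∀ x : V, s (s x) = x := by
          intro x
          have h1 : B (s x) y = -(B x y) := hBs x
          simp only [hs] at h1 ⊢
          rw [h1]
          have : 2 * -B x y / B y y = -(2 * B x y / B y y) := by ring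
          rw [this, neg_smul, sub_neg_eq_add, sub_add_cancel]
        have hinj : Function.Injective s := Function.LeftInverse.injective hsinv
        have himgsub : T.image s ⊆ T := by
          intro x hx
          rw [Finset.mem_image] at hx
          obtain ⟨b, hb, rfl⟩ := hx
          rw [hTmem] at hb ⊢
          obtain ⟨hbΦ, hbπ⟩ := hb
          constructor
          · exact hreflect y hγΦ b hbΦ
          · obtain ⟨n, hn⟩ := hcrys y hγΦ b hbΦ
            have hc : 2 * B b y / B y y = (n : ℚ) := by
              rw [hn]; field_simp
            have hπy : π y = 0 := (hπ0 y).mpr (hNmem _ (Or.inl ⟨hyΔ', hyJ⟩))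
            simp only [hs]
            rw [hc, show ((n : ℚ)) • y = n • y from Int.cast_smul_eq_zsmul ℚ n y,
              map_sub, map_zsmul, hπy, smul_zero, sub_zero, hbπ]
        have himg : T.image s = T :=
          Finset.eq_of_subset_of_card_le himgsub
            (le_of_eq (Finset.card_image_of_injective T hinj).symm)
        have h1 : ∑ b ∈ T, s b = S := by
          rw [hS]
          conv_rhs => rw [← himg]
          rw [Finset.sum_image (fun a _ b _ h => hinj h)]
        have h2 : B y S = -(B y S) := by
          calc B y S = B y (∑ b ∈ T, s b) := by rw [h1]
            _ = ∑ b ∈ T, B y (s b) := map_sum (B y) _ T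
            _ = ∑ b ∈ T, -(B y b) := by
                refine Finset.sum_congr rfl fun b _ => ?_
                rw [hBsymm y (s b), hBs b, hBsymm b y]
            _ = -(B y S) := by
                rw [Finset.sum_neg_distrib, hS, map_sum (B y)]
        have h3 : B y S = 0 := by linarith
        simpa [LinearMap.mem_ker, LinearMap.flip_apply] using h3
      · -- case y = α0 - σ α0 : S is σ-invariant
        have hσT : T.image (⇑σ) = T := by
          apply Finset.eq_of_subset_of_card_le
          · intro x hx
            rw [Finset.mem_image] at hx
            obtain ⟨b, hb, rfl⟩ := hx
            rw [hTmem] at hb ⊢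
            refine ⟨?_, ?_⟩
            · rw [← hΓΦ σ hσ]; exact Set.mem_image_of_mem _ hb.1
            · rw [hπσ σ hσ b hb.1, hb.2]
          · exact le_of_eq (Finset.card_image_of_injective T σ.injective).symm
        have hσS : σ S = S := by
          rw [hS, map_sum]
          conv_rhs => rw [← hσT]
          rw [Finset.sum_image (fun a _ b _ h => σ.injective h)]
        have hinv : B (σ α0) S = B α0 S := by
          conv_lhs => rw [← hσS]
          exact hΓB σ hσ α0 S
        have : B (α0 - σ α0) S = 0 := by
          rw [map_sub, LinearMap.sub_apply, hinv, sub_self]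
        simpa [LinearMap.mem_ker, LinearMap.flip_apply] using this
    intro x hx
    have := hle hx
    simpa [LinearMap.mem_ker, LinearMap.flip_apply] using this
  -- constancy on fibers
  have hconst : ∀ a ∈ Φ, ∀ a' ∈ Φ, π a = π a' → B a S = B a' S := by
    intro a ha a' ha' hπeq
    have hmem : a - a' ∈ N := by
      rw [← hπ0, map_sub, sub_eq_zero]; exact hπeq
    have h := hkey _ hmem
    rw [map_sub, LinearMap.sub_apply] at h
    linarith
  constructor
  · intro α hα a ha a' ha'
    have h1 : π a = α := ha.2
    have h2 : π a' = α := ha'.2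
    exact hconst a ha.1 a' ha'.1 (by rw [h1, h2])
  · ext α
    simp only [Set.mem_setOf_eq]
    constructor
    · rintro ⟨hα, h⟩
      refine ⟨hα, ?_⟩
      rw [hΦJΓ] at hα
      obtain ⟨⟨a, haΦ, haπ⟩, -⟩ := hα
      have haF : a ∈ Φ ∩ ⇑π ⁻¹' {α} := ⟨haΦ, haπ⟩
      exact ⟨a, haF, h a haF⟩
    · rintro ⟨hα, a, haF, hge⟩
      refine ⟨hα, fun a' ha' => ?_⟩
      have heq : π a' = π a := by
        have h1 : π a' = α := ha'.2
        have h2 : π a = α := haF.2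
        rw [h1, h2]
      rw [hconst a' ha'.1 a haF.1 heq]
      exact hge
end

section
/- Let K be a commutative ring and let A be a finitely presented commutative K-algebra. Then there exist a finitely generated ℤ-subalgebra K' of K and a finitely generated K'-algebra A' such that A is isomorphic to A' ⊗_{K'} K as a K-algebra. In particular, A arises by base change from a finitely generated algebra over a commutative Noetherian ring. -/
open scoped TensorProduct

/-- **Noetherian approximation** (Section 8 of the paper).  Every finitely
presented commutative algebra `A` over a commutative ring `K` arises by base
change from a finitely generated algebra `A'` over a finitely generated (hence
Noetherian) `ℤ`-subalgebra `K'` of `K`. -/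
theorem finitePresentation_descends_to_finitely_generated_subring
    {K : Type u} [CommRing K] {A : Type v} [CommRing A] [Algebra K A]
    (hfp : Algebra.FinitePresentation K A) :
    ∃ (K' : Subalgebra ℤ K) (A' : Type u) (_ : CommRing A') (_ : Algebra K' A'),
      K'.FG ∧ IsNoetherianRing K' ∧ Algebra.FiniteType K' A' ∧
      Nonempty ((K ⊗[K'] A') ≃ₐ[K] A) := by
  let P := Algebra.Presentation.ofFinitePresentation K A
  -- `K'` is the subring generated by the coefficients of the relations of `P`; Mathlib states
  -- its instances for the type synonym `P.Core`, so we transfer them to the subalgebra `P.core`.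
  have hcore : Algebra.FiniteType ℤ P.core := inferInstanceAs (Algebra.FiniteType ℤ P.Core)
  have : P.HasCoeffs P.core := inferInstanceAs (P.HasCoeffs P.Core)
  exact ⟨P.core, P.ModelOfHasCoeffs P.core, inferInstance, inferInstance,
    (Subalgebra.fg_iff_finiteType _).mpr hcore, Algebra.FiniteType.isNoetherianRing ℤ P.core,
    inferInstance, ⟨P.tensorModelOfHasCoeffsEquiv P.core⟩⟩
end
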